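/- arXiv:2511.08256 — 4 statements merged into one kernel-verified Lean document; each statement's English description precedes it below -/
import Mathlib

section
/- Let σ ≥ 1/√2 and δ = 2 + σ + 1/(2σ). For every real g with σ < g and for all real numbers a, b with a + b = g, a ≥ b ≥ 0, and a ≤ σ: (1+a)² + 2(g−a) + (g−a)² ≤ 2g + 1 + σ² + (g−σ)². -/
theorem sq_add_sq_le_of_le_of_le {a b s : ℝ} (hba : b ≤ a) (has : a ≤ s) :
    a ^ 2 + b ^ 2 ≤ s ^ 2 + (a + b - s) ^ 2 := by
  -- `s ^ 2 + (a + b - s) ^ 2 - (a ^ 2 + b ^ 2) = 2 * (s - a) * (s - b)`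
  have hsb : 0 ≤ s - b := by linarith
  linear_combination 2 * mul_nonneg (sub_nonneg.2 has) hsb

theorem stmt_4_general (σ : ℝ)
    (g a b : ℝ) (hab : a + b = g) (hba : a ≥ b) (ha : a ≤ σ) :
    (1 + a) ^ 2 + 2 * (g - a) + (g - a) ^ 2 ≤ 2 * g + 1 + σ ^ 2 + (g - σ) ^ 2 := by
  subst hab
  linear_combination sq_add_sq_le_of_le_of_le hba ha

theorem stmt_4 (σ : ℝ) (hσ : σ ≥ 1 / Real.sqrt 2) (δ : ℝ) (hδ : δ = 2 + σ + 1 / (2 * σ))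
    (g a b : ℝ) (hg : σ < g) (hab : a + b = g) (hba : a ≥ b) (hb : b ≥ 0) (ha : a ≤ σ) :
    (1 + a) ^ 2 + 2 * (g - a) + (g - a) ^ 2 ≤ 2 * g + 1 + σ ^ 2 + (g - σ) ^ 2 :=
  stmt_4_general σ g a b hab hba ha
end

section
/- Let σ ≥ 1/√2 and δ = 2 + σ + 1/(2σ). Every σ-separable ²graph G with g := v̄(G) − 1 ≥ σ + 1/(2σ) satisfies ē(G) ≤ δg < δ·v̄(G). -/
/-- A ²graph on a vertex universe `α`: a set of vertices together with a set of
ordered pairs of vertices as edges. -/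
structure TwoGraph (α : Type*) where
  verts : Set α
  edges : Set (α × α)
  edges_sub : edges ⊆ verts ×ˢ verts

namespace TwoGraph

variable {α : Type*}

/-- Normalized vertex number `v̄(G) = |V(G)|/k`. -/
noncomputable def vbar (k : ℕ) (G : TwoGraph α) : ℝ := (G.verts.ncard : ℝ) / k

/-- Normalized edge number `ē(G) = |E(G)|/k²`. -/
noncomputable def ebar (k : ℕ) (G : TwoGraph α) : ℝ := (G.edges.ncard : ℝ) / k ^ 2

/-- `C` is a sub²graph of `G`. -/
def IsSub (C G : TwoGraph α) : Prop := C.verts ⊆ G.verts ∧ C.edges ⊆ G.edges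

/-- `C` is an induced sub²graph of `G`. -/
def IsInduced (C G : TwoGraph α) : Prop :=
  C.verts ⊆ G.verts ∧ C.edges = G.edges ∩ (C.verts ×ˢ C.verts)

/-- `(A, B)` is a separation of `G` (relative to the fixed `k`). -/
def IsSeparation (k : ℕ) (G A B : TwoGraph α) : Prop :=
  IsInduced A G ∧ IsInduced B G ∧ A.verts ≠ G.verts ∧ B.verts ≠ G.verts ∧
    A.verts ∪ B.verts = G.verts ∧ A.edges ∪ B.edges = G.edges ∧
    (A.verts ∩ B.verts).ncard = k

/-- `G` is σ-separable: every sub²graph `C` with `v̄(C) > 1 + σ` has a separation. -/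
def Separable (k : ℕ) (σ : ℝ) (G : TwoGraph α) : Prop :=
  ∀ C : TwoGraph α, IsSub C G → 1 + σ < vbar k C → ∃ A B, IsSeparation k C A B

end TwoGraph

/-! Induction on the number of vertices, carrying the stronger bound `ē ≤ f(v̄ − 1)` with `f` the
piecewise function `edgeBound σ t` (`t = 1/(2σ)`, so `δ = 2 + σ + t`). While `g = v̄ − 1 ≤ σ`
the trivial bound `ē ≤ v̄²` suffices. Otherwise split `G` by a separation `(A, B)` with
`v̄(A) ≤ v̄(B)`, so that the two values of `g` add up. If `A` is small, every edge of `G` outside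
`B` lies in `V(A)²` minus the square of the separator, which gives `ē(G) ≤ ē(B) + v̄(A)² − 1`;
if both parts are large, `ē(G) ≤ ē(A) + ē(B)` and `f` is linear there. -/

/-- When `2 σ t = 1` the three pieces agree at `σ` and at `σ + t`, so the bound is continuous. -/
noncomputable def edgeBound (σ t g : ℝ) : ℝ :=
  if g ≤ σ then (1 + g) ^ 2
  else if g < σ + t then 1 + 2 * g + σ ^ 2 + (g - σ) ^ 2
  else (2 + σ + t) * g

section EdgeBound

variable {σ t x y : ℝ}

theorem edgeBound_of_le (h : x ≤ σ) : edgeBound σ t x = (1 + x) ^ 2 := if_pos h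

theorem edgeBound_of_lt_of_lt (h₁ : σ < x) (h₂ : x < σ + t) :
    edgeBound σ t x = 1 + 2 * x + σ ^ 2 + (x - σ) ^ 2 := by
  rw [edgeBound, if_neg h₁.not_ge, if_pos h₂]

theorem edgeBound_of_add_le (ht : 0 < t) (h : σ + t ≤ x) : edgeBound σ t x = (2 + σ + t) * x := by
  rw [edgeBound, if_neg (by linarith), if_neg h.not_gt]

theorem edgeBound_add_of_add_le (ht : 0 < t) (hx₀ : 0 ≤ x) (hx : σ + t ≤ x) (hy : σ + t ≤ y) :
    edgeBound σ t x + edgeBound σ t y = edgeBound σ t (x + y) := by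
  rw [edgeBound_of_add_le ht hx, edgeBound_of_add_le ht hy, edgeBound_of_add_le ht (by linarith)]
  ring

theorem edgeBound_add_sq_le_of_lt (hx : 0 ≤ x) (hxy : x ≤ y) (hσ : σ < x + y) (h : x + y < σ + t) :
    edgeBound σ t y + ((1 + x) ^ 2 - 1) ≤ edgeBound σ t (x + y) := by
  rw [edgeBound_of_lt_of_lt hσ h]
  rcases le_or_gt y σ with hyσ | hyσ
  · rw [edgeBound_of_le hyσ]
    nlinarith [mul_nonneg (by linarith : (0:ℝ) ≤ σ - x) (by linarith : (0:ℝ) ≤ σ - y)]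
  · rw [edgeBound_of_lt_of_lt hyσ (by linarith)]
    nlinarith [mul_nonneg hx (sub_nonneg.2 hyσ.le)]

theorem edgeBound_add_sq_le_of_ge (ht : 0 < t) (hσt : 2 * σ * t = 1)
    (hx : 0 ≤ x) (hxy : x ≤ y) (hxt : x < σ + t) (h : σ + t ≤ x + y) :
    edgeBound σ t y + ((1 + x) ^ 2 - 1) ≤ edgeBound σ t (x + y) := by
  rw [edgeBound_of_add_le ht h]
  rcases le_or_gt y σ with hyσ | hyσ
  · -- `x, y ∈ [t, σ]`, and `(σ - z)(z - t) ≥ 0` reads `z² ≤ (σ + t) z - 1/2`.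
    rw [edgeBound_of_le hyσ]
    nlinarith [mul_nonneg (by linarith : (0:ℝ) ≤ σ - x) (by linarith : (0:ℝ) ≤ x - t),
      mul_nonneg (by linarith : (0:ℝ) ≤ σ - y) (by linarith : (0:ℝ) ≤ y - t)]
  rcases lt_or_ge y (σ + t) with hyt | hyt
  · rw [edgeBound_of_lt_of_lt hyσ hyt]
    rcases le_total x t with hxt | hxt
    · nlinarith [mul_nonneg (by linarith : (0:ℝ) ≤ σ + t - y)
          (by linarith : (0:ℝ) ≤ x + y - (σ + t)),
        mul_nonneg hx (by linarith : (0:ℝ) ≤ t - x)]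
    rcases le_total x σ with hxσ | hxσ
    · nlinarith [mul_nonneg (by linarith : (0:ℝ) ≤ σ - x) (by linarith : (0:ℝ) ≤ x - t),
        mul_nonneg (by linarith : (0:ℝ) ≤ y - σ) (by linarith : (0:ℝ) ≤ 2*σ + t - y)]
    · nlinarith [mul_nonneg (by linarith : (0:ℝ) ≤ y - x) (by linarith : (0:ℝ) ≤ x - t),
        mul_nonneg (by linarith : (0:ℝ) ≤ y - σ) (by linarith : (0:ℝ) ≤ 2*(σ+t) - x - y)]
  · rw [edgeBound_of_add_le ht hyt]
    nlinarith [mul_nonneg hx (by linarith : (0:ℝ) ≤ σ + t - x)]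

theorem edgeBound_add_sq_le (ht : 0 < t) (hσt : 2 * σ * t = 1) (hx : 0 ≤ x) (hxy : x ≤ y)
    (hxt : x < σ + t) (hσ : σ < x + y) :
    edgeBound σ t y + ((1 + x) ^ 2 - 1) ≤ edgeBound σ t (x + y) := by
  rcases lt_or_ge (x + y) (σ + t) with h | h
  · exact edgeBound_add_sq_le_of_lt hx hxy hσ h
  · exact edgeBound_add_sq_le_of_ge ht hσt hx hxy hxt h

end EdgeBound

namespace TwoGraph

variable {α : Type*} {k : ℕ} {σ : ℝ} {G A B C : TwoGraph α}

theorem IsSub.trans (h₁ : IsSub C A) (h₂ : IsSub A G) : IsSub C G :=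
  ⟨h₁.1.trans h₂.1, h₁.2.trans h₂.2⟩

theorem IsInduced.isSub (h : IsInduced A G) : IsSub A G :=
  ⟨h.1, h.2 ▸ Set.inter_subset_left⟩

theorem Separable.mono (hG : Separable k σ G) (h : IsSub C G) : Separable k σ C :=
  fun D hD => hG D (hD.trans h)

theorem ebar_le_vbar_sq (hG : G.verts.Finite) : ebar k G ≤ vbar k G ^ 2 := by
  have h : G.edges.ncard ≤ G.verts.ncard ^ 2 := by
    rw [sq, ← Set.ncard_prod]
    exact Set.ncard_le_ncard G.edges_sub (hG.prod hG)
  rw [ebar, vbar, div_pow]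
  gcongr
  exact_mod_cast h

namespace IsSeparation

theorem left_isInduced (h : IsSeparation k G A B) : IsInduced A G := h.1

theorem right_isInduced (h : IsSeparation k G A B) : IsInduced B G := h.2.1

theorem left_ne (h : IsSeparation k G A B) : A.verts ≠ G.verts := h.2.2.1

theorem verts_union (h : IsSeparation k G A B) : A.verts ∪ B.verts = G.verts := h.2.2.2.2.1

theorem edges_union (h : IsSeparation k G A B) : A.edges ∪ B.edges = G.edges := h.2.2.2.2.2.1

theorem ncard_inter (h : IsSeparation k G A B) : (A.verts ∩ B.verts).ncard = k := h.2.2.2.2.2.2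

theorem symm (h : IsSeparation k G A B) : IsSeparation k G B A := by
  obtain ⟨hA, hB, hAG, hBG, hV, hE, hS⟩ := h
  exact ⟨hB, hA, hBG, hAG, Set.union_comm _ _ ▸ hV, Set.union_comm _ _ ▸ hE,
    Set.inter_comm _ _ ▸ hS⟩

theorem ncard_left_lt (h : IsSeparation k G A B) (hG : G.verts.Finite) :
    A.verts.ncard < G.verts.ncard :=
  Set.ncard_lt_ncard (h.left_isInduced.1.ssubset_of_ne h.left_ne) hG

theorem one_le_vbar_left (h : IsSeparation k G A B) (hk : 0 < k) (hG : G.verts.Finite) :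
    1 ≤ vbar k A := by
  have hkA : k ≤ A.verts.ncard :=
    h.ncard_inter ▸ Set.ncard_le_ncard Set.inter_subset_left (hG.subset h.left_isInduced.1)
  rw [vbar, le_div_iff₀ (by exact_mod_cast hk), one_mul]
  exact_mod_cast hkA

theorem vbar_add (h : IsSeparation k G A B) (hk : k ≠ 0) (hG : G.verts.Finite) :
    vbar k A + vbar k B = vbar k G + 1 := by
  have hcard := Set.ncard_union_add_ncard_inter A.verts B.verts
    (hG.subset h.left_isInduced.1) (hG.subset h.right_isInduced.1)
  rw [h.verts_union, h.ncard_inter] at hcard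
  have hcard' : (A.verts.ncard : ℝ) + B.verts.ncard = G.verts.ncard + k := by
    exact_mod_cast (by omega : A.verts.ncard + B.verts.ncard = G.verts.ncard + k)
  rw [vbar, vbar, vbar, ← add_div, hcard', add_div, div_self (by exact_mod_cast hk)]

theorem ebar_le_add (h : IsSeparation k G A B) : ebar k G ≤ ebar k A + ebar k B := by
  rw [ebar, ebar, ebar, ← add_div, ← h.edges_union]
  gcongr
  exact_mod_cast Set.ncard_union_le _ _

-- An edge of `G` outside `B` lies in `A`, but not inside the separator, which `B` induces.
theorem edges_subset (h : IsSeparation k G A B) :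
    G.edges ⊆ B.edges ∪ (A.verts ×ˢ A.verts \ (A.verts ∩ B.verts) ×ˢ (A.verts ∩ B.verts)) := by
  intro e he
  by_cases heB : e ∈ B.edges
  · exact Or.inl heB
  have heA : e ∈ A.edges := (h.edges_union ▸ he).resolve_right heB
  refine Or.inr ⟨A.edges_sub heA, fun heS => heB ?_⟩
  rw [h.right_isInduced.2]
  exact ⟨he, Set.prod_mono Set.inter_subset_right Set.inter_subset_right heS⟩

theorem ncard_edges_add_le (h : IsSeparation k G A B) (hG : G.verts.Finite) :
    G.edges.ncard + k * k ≤ B.edges.ncard + A.verts.ncard * A.verts.ncard := by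
  have hA : A.verts.Finite := hG.subset h.left_isInduced.1
  have hB : B.verts.Finite := hG.subset h.right_isInduced.1
  have hS : (A.verts ∩ B.verts) ×ˢ (A.verts ∩ B.verts) ⊆ A.verts ×ˢ A.verts :=
    Set.prod_mono Set.inter_subset_left Set.inter_subset_left
  have hdiff := Set.ncard_sdiff' hS (hA.prod hA)
  have hkA : k * k ≤ A.verts.ncard * A.verts.ncard := by
    rw [← h.ncard_inter, ← Set.ncard_prod, ← Set.ncard_prod]
    exact Set.ncard_le_ncard hS (hA.prod hA)
  rw [Set.ncard_prod, Set.ncard_prod, h.ncard_inter] at hdiff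
  have := (Set.ncard_le_ncard h.edges_subset
    (((hB.prod hB).subset B.edges_sub).union ((hA.prod hA).sdiff))).trans (Set.ncard_union_le _ _)
  omega

theorem ebar_le_ebar_add_vbar_sq_sub_one (h : IsSeparation k G A B) (hk : k ≠ 0)
    (hG : G.verts.Finite) : ebar k G ≤ ebar k B + (vbar k A ^ 2 - 1) := by
  have hN : (G.edges.ncard : ℝ) + k ^ 2 ≤ B.edges.ncard + A.verts.ncard ^ 2 := by
    simpa only [sq] using (by exact_mod_cast h.ncard_edges_add_le hG :
      (G.edges.ncard : ℝ) + k * k ≤ B.edges.ncard + A.verts.ncard * A.verts.ncard)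
  have hrhs : ebar k B + (vbar k A ^ 2 - 1) =
      ((B.edges.ncard : ℝ) + A.verts.ncard ^ 2 - k ^ 2) / k ^ 2 := by
    rw [ebar, vbar]
    field_simp
    ring
  rw [hrhs, ebar]
  gcongr
  linarith

theorem ebar_le_edgeBound {t : ℝ} (h : IsSeparation k G A B) (hk : 0 < k) (hG : G.verts.Finite)
    (ht : 0 < t) (hσt : 2 * σ * t = 1) (hAB : vbar k A ≤ vbar k B) (hσ : σ < vbar k G - 1)
    (hA : ebar k A ≤ edgeBound σ t (vbar k A - 1)) (hB : ebar k B ≤ edgeBound σ t (vbar k B - 1)) :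
    ebar k G ≤ edgeBound σ t (vbar k G - 1) := by
  have hsum : (vbar k A - 1) + (vbar k B - 1) = vbar k G - 1 := by
    linarith [h.vbar_add hk.ne' hG]
  have hx : 0 ≤ vbar k A - 1 := sub_nonneg.2 (h.one_le_vbar_left hk hG)
  rw [← hsum] at hσ ⊢
  rcases lt_or_ge (vbar k A - 1) (σ + t) with hsmall | hlarge
  · calc ebar k G ≤ ebar k B + (vbar k A ^ 2 - 1) := h.ebar_le_ebar_add_vbar_sq_sub_one hk.ne' hG
      _ ≤ edgeBound σ t (vbar k B - 1) + ((1 + (vbar k A - 1)) ^ 2 - 1) := by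
        rw [add_sub_cancel]; linarith
      _ ≤ _ := edgeBound_add_sq_le ht hσt hx (by linarith) hsmall hσ
  · calc ebar k G ≤ ebar k A + ebar k B := h.ebar_le_add
      _ ≤ edgeBound σ t (vbar k A - 1) + edgeBound σ t (vbar k B - 1) := add_le_add hA hB
      _ = _ := edgeBound_add_of_add_le ht hx hlarge (by linarith)

end IsSeparation

theorem Separable.ebar_le_edgeBound {t : ℝ} (hk : 0 < k) (ht : 0 < t) (hσt : 2 * σ * t = 1)
    (hG : G.verts.Finite) (hsep : Separable k σ G) :
    ebar k G ≤ edgeBound σ t (vbar k G - 1) := by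
  induction hn : G.verts.ncard using Nat.strong_induction_on generalizing G with
  | _ n ih =>
  rcases le_or_gt (vbar k G - 1) σ with hsmall | hlarge
  · rw [edgeBound_of_le hsmall, add_sub_cancel]
    exact ebar_le_vbar_sq hG
  obtain ⟨A, B, h⟩ := hsep G ⟨subset_rfl, subset_rfl⟩ (by linarith)
  have hA := ih _ (hn ▸ h.ncard_left_lt hG) (hG.subset h.left_isInduced.1)
    (hsep.mono h.left_isInduced.isSub) rfl
  have hB := ih _ (hn ▸ h.symm.ncard_left_lt hG) (hG.subset h.right_isInduced.1)
    (hsep.mono h.right_isInduced.isSub) rfl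
  rcases le_total (vbar k A) (vbar k B) with hAB | hBA
  · exact h.ebar_le_edgeBound hk hG ht hσt hAB hlarge hA hB
  · exact h.symm.ebar_le_edgeBound hk hG ht hσt hBA hlarge hB hA

end TwoGraph

theorem stmt_10_general (k : ℕ) (hk : 0 < k) (σ : ℝ) (hσ : σ ≥ 1 / Real.sqrt 2) (δ : ℝ)
    (hδ : δ = 2 + σ + 1 / (2 * σ)) (α : Type) (G : TwoGraph α)
    (hsep : TwoGraph.Separable k σ G)
    (hg : TwoGraph.vbar k G - 1 ≥ σ + 1 / (2 * σ)) :
    TwoGraph.ebar k G ≤ δ * (TwoGraph.vbar k G - 1) ∧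
      δ * (TwoGraph.vbar k G - 1) < δ * TwoGraph.vbar k G := by
  have hσ₀ : 0 < σ := lt_of_lt_of_le (by positivity) hσ
  have ht : 0 < 1 / (2 * σ) := by positivity
  have hσt : 2 * σ * (1 / (2 * σ)) = 1 := by field_simp
  have hG : G.verts.Finite := Set.finite_of_ncard_ne_zero fun h₀ => by
    rw [TwoGraph.vbar, h₀, Nat.cast_zero, zero_div] at hg
    linarith
  have hδ₀ : 0 < δ := hδ ▸ by positivity
  have hbound := hsep.ebar_le_edgeBound hk ht hσt hG
  rw [edgeBound_of_add_le ht hg, ← hδ] at hbound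
  exact ⟨hbound, mul_lt_mul_of_pos_left (sub_one_lt _) hδ₀⟩

theorem stmt_10 (k : ℕ) (hk : 0 < k) (σ : ℝ) (hσ : σ ≥ 1 / Real.sqrt 2) (δ : ℝ)
    (hδ : δ = 2 + σ + 1 / (2 * σ)) (α : Type) [Fintype α] (G : TwoGraph α)
    (hsep : TwoGraph.Separable k σ G)
    (hg : TwoGraph.vbar k G - 1 ≥ σ + 1 / (2 * σ)) :
    TwoGraph.ebar k G ≤ δ * (TwoGraph.vbar k G - 1) ∧
      δ * (TwoGraph.vbar k G - 1) < δ * TwoGraph.vbar k G :=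
  stmt_10_general k hk σ hσ δ hδ α G hsep hg
end

section
/- Let z⃗ ∈ ℝˡ, z ≥ ‖z⃗‖ (Euclidean norm), and τ ∈ [0, z/2]. Consider maximizing f(x, x⃗) = x² − ‖x⃗‖² + (z−x)² − ‖z⃗−x⃗‖² over x ∈ [τ, z/2] and x⃗ ∈ ℝˡ with ‖x⃗‖ ≤ x and ‖z⃗−x⃗‖ ≤ z−x. Then the maximum is attained at x = τ with x⃗ = 0⃗ if z⃗ = 0⃗, and at x = τ with x⃗ = min(1/2, τ/‖z⃗‖)·z⃗ otherwise. -/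
/-!
Write `c = ‖zv‖`. The parallelogram law gives
`‖xv‖² + ‖zv - xv‖² = 2 ‖xv - zv/2‖² + c²/2`, and `‖xv‖ ≤ x` forces `‖xv - zv/2‖ ≥ c/2 - x`.
Hence for fixed `x` the objective is at most its value at the point of norm `m = min (c/2) x`
on the segment `[0, zv]`, namely `x² + (z - x)² - m² - (c - m)²`. This profile is
antitone on `x ≤ z/2` (it is `(z - c)(z + c - 2x)` for `x ≤ c/2` and `x² + (z - x)² - c²/2`
beyond), so the maximum is taken at `x = τ`.
-/

open Set

/-- The maximum of the objective over `xv` at a fixed first coordinate `t`, where `c = ‖zv‖`. -/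
noncomputable def profile (z c t : ℝ) : ℝ :=
  t ^ 2 + (z - t) ^ 2 - (min (c / 2) t ^ 2 + (c - min (c / 2) t) ^ 2)

theorem profile_antitoneOn {z c : ℝ} (hc : c ≤ z) : AntitoneOn (profile z c) (Iic (z / 2)) := by
  intro s _ t ht hst
  rw [mem_Iic] at ht
  simp only [profile]
  rcases min_cases (c / 2) s with ⟨hms, hs⟩ | ⟨hms, hs⟩ <;>
    rcases min_cases (c / 2) t with ⟨hmt, ht'⟩ | ⟨hmt, ht'⟩ <;> rw [hms, hmt] <;>
    nlinarith

theorem min_half_div_mul {τ c : ℝ} (hτ : 0 ≤ τ) (hc : 0 ≤ c) :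
    min (1 / 2) (τ / c) * c = min (c / 2) τ := by
  rcases hc.eq_or_lt with rfl | hc
  · simp [hτ]
  · rw [min_mul_of_nonneg _ _ hc.le, div_mul_cancel₀ _ hc.ne', one_div_mul_eq_div]

section InnerProductSpace

variable {E : Type*} [NormedAddCommGroup E] [InnerProductSpace ℝ E]

theorem norm_sq_add_norm_sub_sq_eq (x v : E) :
    ‖x‖ ^ 2 + ‖v - x‖ ^ 2 = 2 * ‖x - (1 / 2 : ℝ) • v‖ ^ 2 + ‖v‖ ^ 2 / 2 := by
  have h := parallelogram_law_with_norm ℝ (x - (1 / 2 : ℝ) • v) ((1 / 2 : ℝ) • v)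
  have hsub : x - (1 / 2 : ℝ) • v - (1 / 2 : ℝ) • v = -(v - x) := by
    rw [sub_sub, ← add_smul]; norm_num
  rw [sub_add_cancel, hsub, norm_neg, norm_smul, Real.norm_of_nonneg (by norm_num)] at h
  nlinarith [h]

theorem half_norm_sub_min_le_norm_sub_half_smul {x v : E} {t : ℝ} (hx : ‖x‖ ≤ t) :
    ‖v‖ / 2 - min (‖v‖ / 2) t ≤ ‖x - (1 / 2 : ℝ) • v‖ := by
  have h := norm_sub_norm_le ((1 / 2 : ℝ) • v) x
  rw [norm_sub_rev, norm_smul, Real.norm_of_nonneg (by norm_num)] at h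
  rcases min_cases (‖v‖ / 2) t with ⟨hm, -⟩ | ⟨hm, -⟩ <;> rw [hm]
  · simp
  · linarith

theorem min_sq_add_sub_min_sq_le {x v : E} {t : ℝ} (hx : ‖x‖ ≤ t) :
    min (‖v‖ / 2) t ^ 2 + (‖v‖ - min (‖v‖ / 2) t) ^ 2 ≤ ‖x‖ ^ 2 + ‖v - x‖ ^ 2 := by
  have hd := half_norm_sub_min_le_norm_sub_half_smul (v := v) hx
  have hd0 : 0 ≤ ‖v‖ / 2 - min (‖v‖ / 2) t := sub_nonneg.2 (min_le_left _ _)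
  rw [norm_sq_add_norm_sub_sq_eq]
  nlinarith [pow_le_pow_left₀ hd0 hd 2]

theorem objective_le_profile {x v : E} {z t : ℝ} (hx : ‖x‖ ≤ t) :
    t ^ 2 - ‖x‖ ^ 2 + (z - t) ^ 2 - ‖v - x‖ ^ 2 ≤ profile z ‖v‖ t := by
  have := min_sq_add_sub_min_sq_le (v := v) hx
  simp only [profile]
  linarith

theorem norm_min_half_div_smul {τ : ℝ} (hτ : 0 ≤ τ) (v : E) :
    ‖min (1 / 2) (τ / ‖v‖) • v‖ = min (‖v‖ / 2) τ := by
  rw [norm_smul, Real.norm_of_nonneg (le_min (by norm_num) (by positivity)),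
    min_half_div_mul hτ (norm_nonneg v)]

theorem norm_sub_min_half_div_smul {τ : ℝ} (hτ : 0 ≤ τ) (v : E) :
    ‖v - min (1 / 2) (τ / ‖v‖) • v‖ = ‖v‖ - min (‖v‖ / 2) τ := by
  have hr : min (1 / 2 : ℝ) (τ / ‖v‖) ≤ 1 := (min_le_left _ _).trans (by norm_num)
  rw [show v - min (1 / 2 : ℝ) (τ / ‖v‖) • v = (1 - min (1 / 2 : ℝ) (τ / ‖v‖)) • v by
      rw [sub_smul, one_smul], norm_smul, Real.norm_of_nonneg (sub_nonneg.2 hr), sub_mul, one_mul,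
    min_half_div_mul hτ (norm_nonneg v)]

theorem objective_min_half_div_smul {τ z : ℝ} (hτ : 0 ≤ τ) (v : E) :
    τ ^ 2 - ‖min (1 / 2) (τ / ‖v‖) • v‖ ^ 2 + (z - τ) ^ 2 - ‖v - min (1 / 2) (τ / ‖v‖) • v‖ ^ 2 =
      profile z ‖v‖ τ := by
  rw [norm_min_half_div_smul hτ, norm_sub_min_half_div_smul hτ, profile]
  ring

end InnerProductSpace

theorem stmt_14 (l : ℕ) (zv : EuclideanSpace ℝ (Fin l)) (z : ℝ) (hz : ‖zv‖ ≤ z)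
    (τ : ℝ) (hτ0 : 0 ≤ τ) (hτ : τ ≤ z / 2) :
    ∃ xstar : EuclideanSpace ℝ (Fin l),
      (zv = 0 → xstar = 0) ∧
      (zv ≠ 0 → xstar = min (1 / 2) (τ / ‖zv‖) • zv) ∧
      ‖xstar‖ ≤ τ ∧ ‖zv - xstar‖ ≤ z - τ ∧
      ∀ (x : ℝ) (xv : EuclideanSpace ℝ (Fin l)),
        τ ≤ x → x ≤ z / 2 → ‖xv‖ ≤ x → ‖zv - xv‖ ≤ z - x →
          x ^ 2 - ‖xv‖ ^ 2 + (z - x) ^ 2 - ‖zv - xv‖ ^ 2 ≤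
            τ ^ 2 - ‖xstar‖ ^ 2 + (z - τ) ^ 2 - ‖zv - xstar‖ ^ 2 := by
  refine ⟨min (1 / 2) (τ / ‖zv‖) • zv, fun h => by simp [h], fun _ => rfl, ?_, ?_, ?_⟩
  · rw [norm_min_half_div_smul hτ0]
    exact min_le_right _ _
  · rw [norm_sub_min_half_div_smul hτ0]
    rcases min_cases (‖zv‖ / 2) τ with ⟨hm, -⟩ | ⟨hm, -⟩ <;> rw [hm] <;> linarith
  · intro x xv hτx hxz hxv _
    calc x ^ 2 - ‖xv‖ ^ 2 + (z - x) ^ 2 - ‖zv - xv‖ ^ 2 ≤ profile z ‖zv‖ x :=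
          objective_le_profile hxv
      _ ≤ profile z ‖zv‖ τ := profile_antitoneOn hz (hτ : τ ∈ Iic (z / 2)) hxz hτx
      _ = _ := (objective_min_half_div_smul hτ0 zv).symm
end

section
/- Let z⃗ ∈ ℝˡ with z⃗ ≠ 0⃗, z ≥ ‖z⃗‖, and let x ∈ [0, ‖z⃗‖/2]. Then for every x⃗ ∈ ℝˡ with ‖x⃗‖ ≤ x and ‖z⃗−x⃗‖ ≤ z−x, one has x² − ‖x⃗‖² + (z−x)² − ‖z⃗−x⃗‖² ≤ z² − ‖z⃗‖² − 2(z − ‖z⃗‖)·x, with equality for x⃗ = (x/‖z⃗‖)·z⃗. -/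
/-! Writing `a = ‖x⃗‖`, `b = ‖z⃗ - x⃗‖` and `n = ‖z⃗‖`, the inequality says `x² + (n - x)² ≤ a² + b²`.
The triangle inequality gives `b ≥ n - a ≥ 0`, and `t ↦ t² + (n - t)²` is decreasing on `[0, n/2]`,
so `a² + b² ≥ a² + (n - a)² ≥ x² + (n - x)²`. The vector `(x / n) • z⃗` attains `a = x`, `b = n - x`. -/

theorem sq_add_sub_sq_le_sq_add_sq {a b n x : ℝ} (ha : 0 ≤ a) (hax : a ≤ x) (hxn : 2 * x ≤ n)
    (hb : n - a ≤ b) : x ^ 2 + (n - x) ^ 2 ≤ a ^ 2 + b ^ 2 :=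
  calc x ^ 2 + (n - x) ^ 2 ≤ a ^ 2 + (n - a) ^ 2 := by
        nlinarith [mul_nonneg (sub_nonneg.2 hax) (by linarith : (0 : ℝ) ≤ n - a - x)]
    _ ≤ a ^ 2 + b ^ 2 := by gcongr; linarith

theorem sq_sub_norm_sq_add_sq_sub_norm_sub_sq_le {E : Type*} [SeminormedAddCommGroup E]
    {v w : E} {x : ℝ} (z : ℝ) (hv : ‖v‖ ≤ x) (hx : x ≤ ‖w‖ / 2) :
    x ^ 2 - ‖v‖ ^ 2 + (z - x) ^ 2 - ‖w - v‖ ^ 2 ≤ z ^ 2 - ‖w‖ ^ 2 - 2 * (z - ‖w‖) * x := by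
  have := sq_add_sub_sq_le_sq_add_sq (norm_nonneg v) hv (by linarith) (norm_sub_norm_le w v)
  linarith

section NormedSpace

variable {E : Type*} [NormedAddCommGroup E] [NormedSpace ℝ E] {v : E} {x : ℝ}

theorem norm_div_norm_smul_self (hv : v ≠ 0) (hx : 0 ≤ x) : ‖(x / ‖v‖) • v‖ = x := by
  rw [norm_smul_of_nonneg (div_nonneg hx (norm_nonneg v)),
    div_mul_cancel₀ x (norm_ne_zero_iff.2 hv)]

theorem norm_sub_div_norm_smul_self (hv : v ≠ 0) (hx : x ≤ ‖v‖) :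
    ‖v - (x / ‖v‖) • v‖ = ‖v‖ - x := by
  have hv' : 0 < ‖v‖ := norm_pos_iff.2 hv
  have hc : 0 ≤ 1 - x / ‖v‖ := by rwa [sub_nonneg, div_le_one hv']
  have hsub : v - (x / ‖v‖) • v = (1 - x / ‖v‖) • v := by rw [sub_smul, one_smul]
  rw [hsub, norm_smul_of_nonneg hc, sub_mul, one_mul, div_mul_cancel₀ x hv'.ne']

theorem sq_sub_norm_sq_add_sq_sub_norm_sub_sq_div_norm_smul_self (z : ℝ) (hv : v ≠ 0)
    (hx0 : 0 ≤ x) (hx : x ≤ ‖v‖) :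
    x ^ 2 - ‖(x / ‖v‖) • v‖ ^ 2 + (z - x) ^ 2 - ‖v - (x / ‖v‖) • v‖ ^ 2 =
      z ^ 2 - ‖v‖ ^ 2 - 2 * (z - ‖v‖) * x := by
  rw [norm_div_norm_smul_self hv hx0, norm_sub_div_norm_smul_self hv hx]
  ring

end NormedSpace

theorem stmt_15_general (l : ℕ) (zv : EuclideanSpace ℝ (Fin l)) (hzv : zv ≠ 0) (z : ℝ)
    (x : ℝ) (hx0 : 0 ≤ x) (hx : x ≤ ‖zv‖ / 2) :
    (∀ xv : EuclideanSpace ℝ (Fin l), ‖xv‖ ≤ x → ‖zv - xv‖ ≤ z - x →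
        x ^ 2 - ‖xv‖ ^ 2 + (z - x) ^ 2 - ‖zv - xv‖ ^ 2 ≤
          z ^ 2 - ‖zv‖ ^ 2 - 2 * (z - ‖zv‖) * x) ∧
      x ^ 2 - ‖(x / ‖zv‖) • zv‖ ^ 2 + (z - x) ^ 2 - ‖zv - (x / ‖zv‖) • zv‖ ^ 2 =
        z ^ 2 - ‖zv‖ ^ 2 - 2 * (z - ‖zv‖) * x :=
  ⟨fun _ hxv _ => sq_sub_norm_sq_add_sq_sub_norm_sub_sq_le z hxv hx,
    sq_sub_norm_sq_add_sq_sub_norm_sub_sq_div_norm_smul_self z hzv hx0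
      (by linarith [norm_nonneg zv])⟩

theorem stmt_15 (l : ℕ) (zv : EuclideanSpace ℝ (Fin l)) (hzv : zv ≠ 0) (z : ℝ)
    (hz : ‖zv‖ ≤ z) (x : ℝ) (hx0 : 0 ≤ x) (hx : x ≤ ‖zv‖ / 2) :
    (∀ xv : EuclideanSpace ℝ (Fin l), ‖xv‖ ≤ x → ‖zv - xv‖ ≤ z - x →
        x ^ 2 - ‖xv‖ ^ 2 + (z - x) ^ 2 - ‖zv - xv‖ ^ 2 ≤
          z ^ 2 - ‖zv‖ ^ 2 - 2 * (z - ‖zv‖) * x) ∧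
      x ^ 2 - ‖(x / ‖zv‖) • zv‖ ^ 2 + (z - x) ^ 2 - ‖zv - (x / ‖zv‖) • zv‖ ^ 2 =
        z ^ 2 - ‖zv‖ ^ 2 - 2 * (z - ‖zv‖) * x :=
  stmt_15_general l zv hzv z x hx0 hx
end
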